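/- Let (x_i, f_i) be a Schauder frame for a Banach space X with minimal associated norm ‖∑ a_i z_i‖_min = sup_{m≤n} ‖∑_{i=m}^n a_i x_i‖ on c₀₀ (completion Z_min). If (y_i) is any associated basis for (x_i, f_i) in an associated space Y, then (y_i) dominates (z_i): there exists K > 0 such that ‖∑ a_i z_i‖_min ≤ K ‖∑ a_i y_i‖ for all finitely supported scalars (a_i). -/

import Mathlib

/-!
If `(y i)` is a Schauder basis of a Banach space, its partial-sum projections `P n` are uniformly
bounded by the Banach–Steinhaus theorem, say by `C`. For `w = ∑ a i • y i` every block
`∑_{i ∈ [m, n]} a i • y i` equals `P (n + 1) w - P m w`, hence has norm at most `2 C ‖w‖`.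
Since the synthesis operator `S` maps `y i` to `x i`, it carries this block to
`∑_{i ∈ [m, n]} a i • x i`, whose norm is therefore at most `2 ‖S‖ C ‖w‖`.
-/

open Filter Finset

section SchauderBasis

variable {𝕜 Y : Type*} [NontriviallyNormedField 𝕜] [NormedAddCommGroup Y] [NormedSpace 𝕜 Y]
  (y : ℕ → Y) (ystar : ℕ → Y →L[𝕜] 𝕜)

noncomputable def basisProj (n : ℕ) : Y →L[𝕜] Y :=
  ∑ i ∈ range n, (ystar i).smulRight (y i)

theorem basisProj_apply (n : ℕ) (w : Y) :
    basisProj y ystar n w = ∑ i ∈ range n, ystar i w • y i := by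
  simp [basisProj]

theorem exists_forall_opNorm_basisProj_le [CompleteSpace Y]
    (hbasis : ∀ w : Y,
      Tendsto (fun n => ∑ i ∈ range n, ystar i w • y i) atTop (nhds w)) :
    ∃ C, ∀ n, ‖basisProj y ystar n‖ ≤ C := by
  refine banach_steinhaus fun w => ?_
  obtain ⟨C, hC⟩ := (hbasis w).norm.bddAbove_range
  exact ⟨C, fun n => by simpa only [basisProj_apply] using hC ⟨n, rfl⟩⟩

theorem norm_sum_Icc_coord_smul_le {C : ℝ} (hC : ∀ n, ‖basisProj y ystar n‖ ≤ C)
    (w : Y) (m n : ℕ) :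
    ‖∑ i ∈ Icc m n, ystar i w • y i‖ ≤ 2 * C * ‖w‖ := by
  have hC0 : 0 ≤ C := (norm_nonneg _).trans (hC 0)
  rcases lt_or_ge n m with hnm | hmn
  · rw [Icc_eq_empty_of_lt hnm, sum_empty, norm_zero]
    positivity
  have hblock : ∑ i ∈ Icc m n, ystar i w • y i =
      basisProj y ystar (n + 1) w - basisProj y ystar m w := by
    rw [basisProj_apply, basisProj_apply, ← Ico_add_one_right_eq_Icc,
      sum_Ico_eq_sub _ (by omega)]
  have hproj (k : ℕ) : ‖basisProj y ystar k w‖ ≤ C * ‖w‖ :=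
    (ContinuousLinearMap.le_opNorm _ w).trans (by gcongr; exact hC k)
  calc ‖∑ i ∈ Icc m n, ystar i w • y i‖
      ≤ ‖basisProj y ystar (n + 1) w‖ + ‖basisProj y ystar m w‖ :=
        hblock ▸ norm_sub_le _ _
    _ ≤ 2 * C * ‖w‖ := by linarith [hproj (n + 1), hproj m]

theorem coord_sum_smul_of_biorthogonal
    (hbi : ∀ i j, ystar i (y j) = if i = j then 1 else 0)
    {a : ℕ → 𝕜} {s : Finset ℕ} (ha : ∀ i ∉ s, a i = 0) (j : ℕ) :
    ystar j (∑ i ∈ s, a i • y i) = a j := by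
  classical
  simp only [map_sum, map_smul, hbi, smul_eq_mul, mul_ite, mul_one, mul_zero, sum_ite_eq]
  split_ifs with hj
  · rfl
  · exact (ha j hj).symm

end SchauderBasis

theorem stmt_7_general (X Y : Type*) [NormedAddCommGroup X] [NormedSpace ℝ X]
    [NormedAddCommGroup Y] [NormedSpace ℝ Y] [CompleteSpace Y]
    (x : ℕ → X)
    (y : ℕ → Y) (ystar : ℕ → Y →L[ℝ] ℝ)
    (hbi : ∀ i j, ystar i (y j) = if i = j then 1 else 0)
    (hbasis : ∀ w : Y,
      Tendsto (fun n => ∑ i ∈ Finset.range n, ystar i w • y i) atTop (nhds w))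
    (S : Y →L[ℝ] X)
    (hS : ∀ i, S (y i) = x i) :
    ∃ K : ℝ, 0 < K ∧ ∀ (a : ℕ → ℝ) (s : Finset ℕ), (∀ i ∉ s, a i = 0) →
      (⨆ p : ℕ × ℕ, ‖∑ i ∈ Finset.Icc p.1 p.2, a i • x i‖) ≤
        K * ‖∑ i ∈ s, a i • y i‖ := by
  obtain ⟨C, hC⟩ := exists_forall_opNorm_basisProj_le y ystar hbasis
  have hC0 : 0 ≤ C := (norm_nonneg _).trans (hC 0)
  refine ⟨2 * ‖S‖ * C + 1, by positivity, fun a s ha => ciSup_le fun ⟨m, n⟩ => ?_⟩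
  set w := ∑ i ∈ s, a i • y i
  have hcoord : ∀ j, ystar j w = a j := coord_sum_smul_of_biorthogonal y ystar hbi ha
  have hsynth : ∑ i ∈ Icc m n, a i • x i = S (∑ i ∈ Icc m n, ystar i w • y i) := by
    simp only [map_sum, map_smul, hS, hcoord]
  calc ‖∑ i ∈ Icc m n, a i • x i‖
      ≤ ‖S‖ * (2 * C * ‖w‖) :=
        hsynth ▸ S.le_opNorm_of_le (norm_sum_Icc_coord_smul_le y ystar hC w m n)
    _ ≤ (2 * ‖S‖ * C + 1) * ‖w‖ := by nlinarith [norm_nonneg S, norm_nonneg w]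

/-- every associated basis of a Schauder frame dominates the minimal
associated basis. -/
theorem stmt_7 (X Y : Type*) [NormedAddCommGroup X] [NormedSpace ℝ X] [CompleteSpace X]
    [NormedAddCommGroup Y] [NormedSpace ℝ Y] [CompleteSpace Y]
    (x : ℕ → X) (f : ℕ → X →L[ℝ] ℝ)
    (hframe : ∀ v : X, Tendsto (fun n => ∑ i ∈ Finset.range n, f i v • x i) atTop (nhds v))
    (hx : ∀ i, x i ≠ 0)
    (y : ℕ → Y) (ystar : ℕ → Y →L[ℝ] ℝ)
    (hbi : ∀ i j, ystar i (y j) = if i = j then 1 else 0)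
    (hbasis : ∀ w : Y,
      Tendsto (fun n => ∑ i ∈ Finset.range n, ystar i w • y i) atTop (nhds w))
    (T : X →L[ℝ] Y) (S : Y →L[ℝ] X)
    (hT : ∀ v : X, Tendsto (fun n => ∑ i ∈ Finset.range n, f i v • y i) atTop (nhds (T v)))
    (hS : ∀ i, S (y i) = x i) :
    ∃ K : ℝ, 0 < K ∧ ∀ (a : ℕ → ℝ) (s : Finset ℕ), (∀ i ∉ s, a i = 0) →
      (⨆ p : ℕ × ℕ, ‖∑ i ∈ Finset.Icc p.1 p.2, a i • x i‖) ≤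
        K * ‖∑ i ∈ s, a i • y i‖ :=
  stmt_7_general X Y x y ystar hbi hbasis S hS
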